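/- The group-key emulation is derivably correct in P[∨_p]: from the single hypothesis (φ₁ ∨_p φ₂) → ψ together with φᵢ (either i=1 or i=2), one can derive ψ; conversely, from (φ₁→ψ) ∧ (φ₂→ψ) together with φᵢ one can derive ψ in P. -/

import Mathlib

/-- Infons of P[∨_p]: atoms, ⊤, ⊥ (an ordinary atom here), conjunction,
primal implication and primal disjunction. -/
inductive Infon : Type
  | atom : ℕ → Infon
  | top : Infon
  | bot : Infon
  | and : Infon → Infon → Infon
  | imp : Infon → Infon → Infon
  | orp : Infon → Infon → Infon
deriving DecidableEq

/-- An infon lies in the language of P[⊥_w], i.e. contains no primal disjunction. -/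
def OrFree : Infon → Prop
  | .and φ ψ => OrFree φ ∧ OrFree ψ
  | .imp φ ψ => OrFree φ ∧ OrFree ψ
  | .orp _ _ => False
  | _ => True

/-- Derivability in the basic primal infon logic P (no rules for ⊥ or ∨_p). -/
inductive DerP : Set Infon → Infon → Prop
  | top (Γ : Set Infon) : DerP Γ .top
  | id (φ : Infon) : DerP {φ} φ
  | weak {Γ φ} (Δ : Set Infon) : DerP Γ φ → DerP (Γ ∪ Δ) φ
  | cut {Γ φ ψ} : DerP Γ φ → DerP (insert φ Γ) ψ → DerP Γ ψ
  | andI {Γ φ ψ} : DerP Γ φ → DerP Γ ψ → DerP Γ (.and φ ψ)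
  | andE1 {Γ φ ψ} : DerP Γ (.and φ ψ) → DerP Γ φ
  | andE2 {Γ φ ψ} : DerP Γ (.and φ ψ) → DerP Γ ψ
  | impI {Γ ψ} (φ : Infon) : DerP Γ ψ → DerP Γ (.imp φ ψ)
  | impE {Γ φ ψ} : DerP Γ φ → DerP Γ (.imp φ ψ) → DerP Γ ψ

/-- Derivability in P[⊥_w]: P plus the weak ⊥-elimination rule. -/
inductive DerW : Set Infon → Infon → Prop
  | top (Γ : Set Infon) : DerW Γ .top
  | id (φ : Infon) : DerW {φ} φ
  | weak {Γ φ} (Δ : Set Infon) : DerW Γ φ → DerW (Γ ∪ Δ) φ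
  | cut {Γ φ ψ} : DerW Γ φ → DerW (insert φ Γ) ψ → DerW Γ ψ
  | andI {Γ φ ψ} : DerW Γ φ → DerW Γ ψ → DerW Γ (.and φ ψ)
  | andE1 {Γ φ ψ} : DerW Γ (.and φ ψ) → DerW Γ φ
  | andE2 {Γ φ ψ} : DerW Γ (.and φ ψ) → DerW Γ ψ
  | impI {Γ ψ} (φ : Infon) : DerW Γ ψ → DerW Γ (.imp φ ψ)
  | impE {Γ φ ψ} : DerW Γ φ → DerW Γ (.imp φ ψ) → DerW Γ ψ
  | botEw {Γ φ ψ} : DerW Γ .bot → DerW Γ (.imp φ ψ) → DerW Γ ψ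

/-- Derivability in P[∨_p]: P plus the two introduction rules for primal disjunction
(and no elimination rule; ⊥ is an ordinary atom). -/
inductive DerO : Set Infon → Infon → Prop
  | top (Γ : Set Infon) : DerO Γ .top
  | id (φ : Infon) : DerO {φ} φ
  | weak {Γ φ} (Δ : Set Infon) : DerO Γ φ → DerO (Γ ∪ Δ) φ
  | cut {Γ φ ψ} : DerO Γ φ → DerO (insert φ Γ) ψ → DerO Γ ψ
  | andI {Γ φ ψ} : DerO Γ φ → DerO Γ ψ → DerO Γ (.and φ ψ)
  | andE1 {Γ φ ψ} : DerO Γ (.and φ ψ) → DerO Γ φ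
  | andE2 {Γ φ ψ} : DerO Γ (.and φ ψ) → DerO Γ ψ
  | impI {Γ ψ} (φ : Infon) : DerO Γ ψ → DerO Γ (.imp φ ψ)
  | impE {Γ φ ψ} : DerO Γ φ → DerO Γ (.imp φ ψ) → DerO Γ ψ
  | orI1 {Γ φ₁} (φ₂ : Infon) : DerO Γ φ₁ → DerO Γ (.orp φ₁ φ₂)
  | orI2 {Γ φ₂} (φ₁ : Infon) : DerO Γ φ₂ → DerO Γ (.orp φ₁ φ₂)

/-- The translation (·)*: primal implication φ→ψ goes to (⊥ ∨_p φ*) → ψ*,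
all other connectives are translated homomorphically. -/
def star : Infon → Infon
  | .and φ ψ => .and (star φ) (star ψ)
  | .imp φ ψ => .imp (.orp .bot (star φ)) (star ψ)
  | .orp φ ψ => .orp (star φ) (star ψ)
  | φ => φ

namespace DerO

theorem of_mem {Γ : Set Infon} {φ : Infon} (h : φ ∈ Γ) : DerO Γ φ := by
  simpa [Set.union_eq_self_of_subset_left (Set.singleton_subset_iff.mpr h)] using weak Γ (id φ)

end DerO

namespace DerP

theorem of_mem {Γ : Set Infon} {φ : Infon} (h : φ ∈ Γ) : DerP Γ φ := by
  simpa [Set.union_eq_self_of_subset_left (Set.singleton_subset_iff.mpr h)] using weak Γ (id φ)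

end DerP

/-- Group-key emulation is derivably correct: from (φ₁ ∨_p φ₂) → ψ and either key φᵢ one
derives ψ in P[∨_p]; conversely, from (φ₁→ψ) ∧ (φ₂→ψ) and either key φᵢ one derives ψ in P. -/
theorem group_key_emulation (φ₁ φ₂ ψ : Infon) :
    DerO {.imp (.orp φ₁ φ₂) ψ, φ₁} ψ ∧
    DerO {.imp (.orp φ₁ φ₂) ψ, φ₂} ψ ∧
    DerP {.and (.imp φ₁ ψ) (.imp φ₂ ψ), φ₁} ψ ∧
    DerP {.and (.imp φ₁ ψ) (.imp φ₂ ψ), φ₂} ψ :=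
  ⟨.impE (.orI1 φ₂ (.of_mem (Set.mem_insert_of_mem _ rfl))) (.of_mem (Set.mem_insert _ _)),
    .impE (.orI2 φ₁ (.of_mem (Set.mem_insert_of_mem _ rfl))) (.of_mem (Set.mem_insert _ _)),
    .impE (.of_mem (Set.mem_insert_of_mem _ rfl)) (.andE1 (.of_mem (Set.mem_insert _ _))),
    .impE (.of_mem (Set.mem_insert_of_mem _ rfl)) (.andE2 (.of_mem (Set.mem_insert _ _)))⟩
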